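/- For the anyonic kernel with q an N-th root of unity (q ≠ 1), for points t_1 < t_2 < ··· < t_n one has f^{⊛n}(t_1,...,t_n) = ([n]_q!/n!) f(t_1)···f(t_n), where [n]_q! = [n]_q [n-1]_q ··· [1]_q and [k]_q = 1 + q + ··· + q^{k-1}. -/

import Mathlib

/-- `Q_π(t_1,…,t_n) = ∏_{i<j, π(i)>π(j)} Q(t_i,t_j)`. -/
def Qpi {T : Type*} (Q : T → T → ℂ) {n : ℕ} (π : Equiv.Perm (Fin n)) (t : Fin n → T) : ℂ :=
  ∏ p ∈ Finset.univ.filter (fun p : Fin n × Fin n => p.1 < p.2 ∧ π p.2 < π p.1),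
    Q (t p.1) (t p.2)

/-- The `Q`-symmetrization `P_n f = (1/n!) Σ_π Q_π(t) f(t∘π⁻¹)`. -/
noncomputable def Psym {T : Type*} (Q : T → T → ℂ) {n : ℕ} (f : (Fin n → T) → ℂ) :
    (Fin n → T) → ℂ :=
  fun t => ((n.factorial : ℂ))⁻¹ * ∑ π : Equiv.Perm (Fin n), Qpi Q π t * f (t ∘ ⇑π⁻¹)

/-- The anyonic kernel: `Q(s,t) = q` if `s < t`, `q̄` if `t < s`. -/
noncomputable def anyonQ {T : Type*} [LinearOrder T] (q : ℂ) : T → T → ℂ :=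
  fun s t => if s < t then q else if t < s then (starRingEnd ℂ) q else 1

/-! On an increasing tuple every factor of `Q_π(t)` is `q`, so `Q_π(t) = q ^ inv(π)`, while
`f^{⊗n}(t ∘ π⁻¹) = f^{⊗n}(t)`. The theorem is therefore the Mahonian identity
`∑_π q ^ inv(π) = [n]_q!`, proved by induction on `n`: inserting the largest value at position `j`
into a permutation of `n` letters creates exactly `n - j` new inversions. -/

open Finset

namespace Equiv.Perm

variable {n : ℕ}

def inversions (π : Perm (Fin n)) : Finset (Fin n × Fin n) :=
  univ.filter fun p => p.1 < p.2 ∧ π p.2 < π p.1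

def insertMax (j : Fin (n + 1)) (σ : Perm (Fin n)) : Perm (Fin (n + 1)) :=
  (finSuccEquiv' j).trans (σ.optionCongr.trans (finSuccEquiv' (Fin.last n)).symm)

@[simp]
lemma insertMax_apply_self (j : Fin (n + 1)) (σ : Perm (Fin n)) :
    insertMax j σ j = Fin.last n := by
  simp [insertMax]

@[simp]
lemma insertMax_apply_succAbove (j : Fin (n + 1)) (σ : Perm (Fin n)) (a : Fin n) :
    insertMax j σ (j.succAbove a) = (σ a).castSucc := by
  simp [insertMax]

lemma insertMax_uncurry_bijective :
    Function.Bijective (Function.uncurry (insertMax (n := n))) := by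
  refine (Fintype.bijective_iff_injective_and_card _).2 ⟨?_, ?_⟩
  · rintro ⟨j, σ⟩ ⟨j', σ'⟩ h
    have hj : j = j' := (insertMax j' σ').injective <| by
      rw [insertMax_apply_self, ← insertMax_apply_self j σ]
      exact (congrArg (· j) h).symm
    subst hj
    refine Prod.ext rfl (Equiv.ext fun a => Fin.castSucc_injective _ ?_)
    simpa using congrArg (· (j.succAbove a)) h
  · simp [Fintype.card_perm, Nat.factorial_succ]

lemma inversions_insertMax (j : Fin (n + 1)) (σ : Perm (Fin n)) :
    inversions (insertMax j σ) =
      {j} ×ˢ Ioi j ∪ (inversions σ).map ((Fin.succAboveEmb j).prodMap (Fin.succAboveEmb j)) := by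
  ext ⟨x, y⟩
  cases x using Fin.succAboveCases j <;> cases y using Fin.succAboveCases j <;>
    simp [inversions, Fin.castSucc_lt_last, Fin.succAbove_ne, Fin.succAbove_lt_succAbove_iff,
      Fin.le_last]

lemma card_inversions_insertMax (j : Fin (n + 1)) (σ : Perm (Fin n)) :
    #(inversions (insertMax j σ)) = (n - j) + #(inversions σ) := by
  have hdisj : _root_.Disjoint ({j} ×ˢ Ioi j)
      ((inversions σ).map ((Fin.succAboveEmb j).prodMap (Fin.succAboveEmb j))) := by
    simp [disjoint_left, Fin.succAbove_ne]
  rw [inversions_insertMax, card_union_of_disjoint hdisj, card_map]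
  simp

theorem sum_pow_card_inversions {R : Type*} [CommSemiring R] (q : R) (n : ℕ) :
    ∑ π : Perm (Fin n), q ^ #(inversions π) =
      ∏ k ∈ range n, ∑ i ∈ range (k + 1), q ^ i := by
  induction n with
  | zero => simp [inversions]
  | succ n ih =>
    have hshift : ∑ j : Fin (n + 1), q ^ (n - (j : ℕ)) = ∑ i ∈ range (n + 1), q ^ i := by
      rw [Fin.sum_univ_eq_sum_range (fun i => q ^ (n - i)), ← sum_range_reflect]
      refine sum_congr rfl fun i hi => ?_
      rw [mem_range] at hi
      congr 1
      omega
    calc ∑ π : Perm (Fin (n + 1)), q ^ #(inversions π)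
        = ∑ p : Fin (n + 1) × Perm (Fin n), q ^ (n - (p.1 : ℕ)) * q ^ #(inversions p.2) := by
          refine (Fintype.sum_bijective _ insertMax_uncurry_bijective _ _ fun p => ?_).symm
          rw [Function.uncurry_apply_pair, card_inversions_insertMax, pow_add]
      _ = ∏ k ∈ range (n + 1), ∑ i ∈ range (k + 1), q ^ i := by
          simp only [Fintype.sum_prod_type]
          rw [← Fintype.sum_mul_sum, hshift, ih, prod_range_succ, mul_comm]

end Equiv.Perm

open Equiv.Perm

lemma Qpi_anyonQ_of_strictMono {T : Type*} [LinearOrder T] (q : ℂ) {n : ℕ}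
    (π : Equiv.Perm (Fin n)) {t : Fin n → T} (ht : StrictMono t) :
    Qpi (anyonQ q) π t = q ^ #(inversions π) := by
  rw [← prod_const]
  refine prod_congr rfl fun p hp => ?_
  simp only [inversions, mem_filter] at hp
  simp [anyonQ, ht hp.2.1]

theorem anyon_symmetric_power_on_ordered_tuples_general {T : Type*} [LinearOrder T]
    (q : ℂ)
    (f : T → ℂ) (n : ℕ) (t : Fin n → T) (ht : StrictMono t) :
    Psym (anyonQ q) (fun s => ∏ i, f (s i)) t
      = ((∏ k ∈ Finset.range n, ∑ i ∈ Finset.range (k + 1), q ^ i) / (n.factorial : ℂ)) *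
          ∏ i, f (t i) := by
  have hterm (π : Equiv.Perm (Fin n)) :
      Qpi (anyonQ q) π t * ∏ i, f ((t ∘ ⇑π⁻¹) i) = q ^ #(inversions π) * ∏ i, f (t i) := by
    rw [Qpi_anyonQ_of_strictMono q π ht]
    exact congrArg _ (Equiv.prod_comp π⁻¹ fun i => f (t i))
  rw [Psym, Fintype.sum_congr _ _ hterm, ← sum_mul, sum_pow_card_inversions, div_eq_inv_mul,
    mul_assoc]

/-- for the anyonic kernel with `q` an `N`-th root of unity (`q ≠ 1`),
on strictly increasing tuples `t_1 < ⋯ < t_n` one has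
`f^{⊛n}(t_1,…,t_n) = ([n]_q!/n!) f(t_1)⋯f(t_n)`, where
`[n]_q! = ∏_{k=1}^n [k]_q` and `[k]_q = 1 + q + ⋯ + q^{k-1}`. -/
theorem anyon_symmetric_power_on_ordered_tuples {T : Type*} [LinearOrder T]
    (q : ℂ) (hq : ‖q‖ = 1) (hq1 : q ≠ 1)
    (N : ℕ) (hqN : q ^ N = 1)
    (f : T → ℂ) (n : ℕ) (t : Fin n → T) (ht : StrictMono t) :
    Psym (anyonQ q) (fun s => ∏ i, f (s i)) t
      = ((∏ k ∈ Finset.range n, ∑ i ∈ Finset.range (k + 1), q ^ i) / (n.factorial : ℂ)) *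
          ∏ i, f (t i) :=
  anyon_symmetric_power_on_ordered_tuples_general q f n t ht
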